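/- Let N : ℝ^d ⊃ U → ℝ^d be a C¹ unit vector field defined near x ∈ M ⊂ ℝ^d that is normal to M along M, where M has reach r > 0. Then for any tangent vector Y ∈ T_x M with Y ≠ 0, ⟨Y, D_Y N⟩ / ⟨Y, Y⟩ ≤ 1/r, where D is the standard directional derivative in ℝ^d. -/

import Mathlib

/-!
Federer's inequality `2 r ⟪w, b - y⟫ ≤ ‖w‖ ‖b - y‖²`, for `y, b ∈ M` and `w` in the polar of the
tangent cone of `M` at `y`, applied with `w = -N x` at `x` and with `w = -N y` at a nearby `y`,
gives after summation `⟪N y - N x, y - x⟫ ≤ ‖y - x‖² / r`; letting `y → x` along a tangent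
direction `Y` turns this into `⟪D_Y N, Y⟫ ≤ ‖Y‖² / r`.

For a proximal normal `q - m` (`m` the nearest point of `q`, `d(q) < r`), Federer's inequality
says that `m` stays the nearest point along the ray from `m` through `q` up to distance `r`.
Following the gradient of the distance function from `q`, which has unit length and along which
the distance grows at unit rate (nearest points depend continuously on the point), one reaches
level `ρ < r` after a path of length `ρ - d(q)`; the triangle inequality then forces the endpoint
onto that ray. A general `w` is the limit of the proximal normals `(y + τ w - m_τ) / τ`.
-/

open Set Metric

/-- M has reach at least r: every point at distance < r from M has a unique nearest point. -/
def HasReach {d : ℕ} (M : Set (EuclideanSpace ℝ (Fin d))) (r : ℝ) : Prop :=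
  ∀ p : EuclideanSpace ℝ (Fin d), infDist p M < r →
    ∃! m : EuclideanSpace ℝ (Fin d), m ∈ M ∧ dist p m = infDist p M

open Filter Topology
open scoped RealInnerProductSpace

theorem isClosed_setOf_exists_mem_of_isCompact {X Y : Type*} [TopologicalSpace X]
    [TopologicalSpace Y] {K : Set Y} (hK : IsCompact K) {C : Set (X × Y)} (hC : IsClosed C) :
    IsClosed {t | ∃ y ∈ K, (t, y) ∈ C} := by
  have : CompactSpace K := isCompact_iff_compactSpace.1 hK
  have hC' : IsClosed ((fun p : X × K ↦ (p.1, (p.2 : Y))) ⁻¹' C) :=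
    hC.preimage (continuous_fst.prodMk (continuous_subtype_val.comp continuous_snd))
  convert isClosedMap_fst_of_compactSpace _ hC' using 1
  ext t
  simp

section InnerProductSpace

variable {E : Type*} [NormedAddCommGroup E] [InnerProductSpace ℝ E]

theorem two_mul_inner_le_norm_sq_of_dist_le {q m b : E} (h : dist q m ≤ dist q b) :
    2 * ⟪q - m, b - m⟫ ≤ ‖b - m‖ ^ 2 := by
  have hqb : q - b = (q - m) - (b - m) := by abel
  rw [dist_eq_norm, dist_eq_norm, hqb] at h
  have := pow_le_pow_left₀ (norm_nonneg _) h 2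
  rw [norm_sub_sq_real (q - m) (b - m)] at this
  linarith

theorem eventually_inner_sub_le_of_forall_tangentConeAt [ProperSpace E] {M : Set E} {y w : E}
    (hw : ∀ v ∈ tangentConeAt ℝ M y, ⟪w, v⟫ ≤ 0) {ε : ℝ} (hε : 0 < ε) :
    ∀ᶠ z in 𝓝[M] y, ⟪w, z - y⟫ ≤ ε * ‖z - y‖ := by
  by_contra h
  obtain ⟨z, hz, hwz⟩ := exists_seq_forall_of_frequently (not_eventually.1 h)
  simp only [not_le] at hwz
  have hne : ∀ n, 0 < ‖z n - y‖ := fun n ↦ norm_pos_iff.2 fun h0 ↦ by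
    simpa [h0] using hwz n
  have hsphere : ∀ n, ‖z n - y‖⁻¹ • (z n - y) ∈ sphere (0 : E) 1 := fun n ↦ by
    rw [mem_sphere_zero_iff_norm, norm_smul, norm_inv, norm_norm, inv_mul_cancel₀ (hne n).ne']
  obtain ⟨v, -, φ, hφ, hv⟩ := (isCompact_sphere (0 : E) 1).tendsto_subseq hsphere
  have hzφ : Tendsto (z ∘ φ) atTop (𝓝[M] y) := hz.comp hφ.tendsto_atTop
  have hvM : v ∈ tangentConeAt ℝ M y := by
    refine mem_tangentConeAt_of_seq atTop (fun n ↦ ‖z (φ n) - y‖⁻¹) (fun n ↦ z (φ n) - y)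
      ?_ ?_ hv
    · simpa using (tendsto_nhdsWithin_iff.1 hzφ).1.sub_const y
    · filter_upwards [(tendsto_nhdsWithin_iff.1 hzφ).2] with n hn
      simpa using hn
  have hεv : ε ≤ ⟪w, v⟫ := by
    refine ge_of_tendsto (tendsto_const_nhds.inner hv) (.of_forall fun n ↦ ?_)
    change ε ≤ ⟪w, ‖z (φ n) - y‖⁻¹ • (z (φ n) - y)⟫
    rw [real_inner_smul_right, ← div_eq_inv_mul, le_div_iff₀ (hne _)]
    exact (hwz _).le
  linarith [hw v hvM]

theorem isLittleO_sub_of_forall_tangentConeAt [ProperSpace E] {M : Set E} {y w : E}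
    (hw : ∀ v ∈ tangentConeAt ℝ M y, ⟪w, v⟫ ≤ 0) {μ : ℝ → E} (hμM : ∀ τ, μ τ ∈ M)
    (hμ : ∀ τ, dist (y + τ • w) (μ τ) ≤ dist (y + τ • w) y) :
    (fun τ ↦ μ τ - y) =o[𝓝[>] 0] fun τ ↦ τ := by
  have hsq : ∀ τ, ‖μ τ - y‖ ^ 2 ≤ 2 * τ * ⟪w, μ τ - y⟫ := fun τ ↦ by
    have h := two_mul_inner_le_norm_sq_of_dist_le (hμ τ)
    rw [show y + τ • w - μ τ = τ • w - (μ τ - y) by abel, show y - μ τ = -(μ τ - y) by abel,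
      inner_neg_right, inner_sub_left, real_inner_smul_left, real_inner_self_eq_norm_sq,
      norm_neg] at h
    linarith
  have hle : ∀ τ, 0 ≤ τ → ∀ c, 0 ≤ c → ⟪w, μ τ - y⟫ ≤ c * ‖μ τ - y‖ →
      ‖μ τ - y‖ ≤ 2 * τ * c := fun τ hτ c hc0 hc ↦ by
    rcases (norm_nonneg (μ τ - y)).eq_or_lt with h0 | hpos
    · rw [← h0]
      positivity
    · nlinarith [(hsq τ).trans (mul_le_mul_of_nonneg_left hc (by positivity))]
  have hμy : Tendsto μ (𝓝[>] 0) (𝓝[M] y) := by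
    refine tendsto_nhdsWithin_iff.2 ⟨?_, .of_forall hμM⟩
    rw [tendsto_iff_norm_sub_tendsto_zero]
    refine squeeze_zero' (g := fun τ ↦ 2 * τ * ‖w‖) (.of_forall fun τ ↦ norm_nonneg _) ?_ ?_
    · filter_upwards [self_mem_nhdsWithin] with τ (hτ : 0 < τ)
      exact hle τ hτ.le ‖w‖ (norm_nonneg w) (real_inner_le_norm w _)
    · simpa using (Continuous.tendsto (f := fun τ : ℝ ↦ 2 * τ * ‖w‖) (by fun_prop) 0)
        |>.mono_left (nhdsWithin_le_nhds (s := Ioi 0))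
  refine Asymptotics.isLittleO_iff.2 fun ε hε ↦ ?_
  filter_upwards [hμy.eventually (eventually_inner_sub_le_of_forall_tangentConeAt hw (half_pos hε)),
    self_mem_nhdsWithin] with τ hτ (hτ0 : 0 < τ)
  rw [Real.norm_eq_abs, abs_of_pos hτ0]
  linarith [hle τ hτ0.le _ (half_pos hε).le hτ]

theorem inner_fderiv_apply_le_of_eventually {F : E → E} {M : Set E} {x Y : E} {C : ℝ}
    (hF : DifferentiableAt ℝ F x)
    (hC : ∀ᶠ y in 𝓝[M] x, ⟪F y - F x, y - x⟫ ≤ C * ‖y - x‖ ^ 2)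
    (hY : Y ∈ tangentConeAt ℝ M x) : ⟪fderiv ℝ F x Y, Y⟫ ≤ C * ‖Y‖ ^ 2 := by
  obtain ⟨c, d, hd, hdM, hcd⟩ := mem_tangentConeAt_iff_exists_seq.1 hY
  have hlim := (hF.hasFDerivAt.hasFDerivWithinAt (s := M)).lim hd hdM hcd
  have hxd : Tendsto (fun n ↦ x + d n) atTop (𝓝[M] x) :=
    tendsto_nhdsWithin_iff.2 ⟨by simpa using hd.const_add x, hdM⟩
  have hev : ∀ᶠ n in atTop,
      ⟪c n • (F (x + d n) - F x), c n • d n⟫ ≤ C * ‖c n • d n‖ ^ 2 := by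
    filter_upwards [hxd.eventually hC] with n hn
    rw [add_sub_cancel_left] at hn
    rw [real_inner_smul_left, real_inner_smul_right, norm_smul, Real.norm_eq_abs, mul_pow, sq_abs]
    nlinarith [sq_nonneg (c n)]
  exact le_of_tendsto_of_tendsto (hlim.inner hcd) ((hcd.norm.pow 2).const_mul C) hev

end InnerProductSpace

namespace HasReach

variable {d : ℕ} {M : Set (EuclideanSpace ℝ (Fin d))} {r : ℝ}

theorem isClosed (hreach : HasReach M r) (hr : 0 < r) : IsClosed M := by
  refine isClosed_of_closure_subset fun p hp ↦ ?_
  have h0 : infDist p M = 0 :=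
    (mem_closure_iff_infDist_zero (closure_nonempty_iff.1 ⟨p, hp⟩)).1 hp
  obtain ⟨m, ⟨hm, hpm⟩, -⟩ := hreach p (h0 ▸ hr)
  rw [h0, dist_eq_zero] at hpm
  exact hpm ▸ hm

/-- A limit of nearest points is a nearest point, hence `m` by uniqueness. -/
theorem eventually_nearest_mem_ball (hreach : HasReach M r) (hr : 0 < r)
    {p m : EuclideanSpace ℝ (Fin d)} (hp : infDist p M < r) (hm : m ∈ M)
    (hpm : dist p m = infDist p M) {η : ℝ} (hη : 0 < η) :
    ∀ᶠ p' in 𝓝 p, ∀ b ∈ M, dist p' b = infDist p' M → b ∈ ball m η := by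
  by_contra h
  obtain ⟨p', hp', hfar⟩ := exists_seq_forall_of_frequently
    ((not_eventually.1 h).and_eventually (ball_mem_nhds p one_pos))
  simp only [not_forall, mem_ball, not_lt, exists_prop] at hfar
  choose b hbM hb hbη using fun n ↦ (hfar n).1
  have hbounded : ∀ n, b n ∈ closedBall p (infDist p M + 2) := fun n ↦ by
    have h1 := infDist_le_infDist_add_dist (x := p' n) (y := p) (s := M)
    have h2 := dist_triangle (b n) (p' n) p
    rw [dist_comm (b n) (p' n), hb n] at h2
    rw [mem_closedBall]
    linarith [(hfar n).2]
  obtain ⟨b', -, φ, hφ, hlim⟩ := (isCompact_closedBall _ _).tendsto_subseq hbounded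
  have hp'φ := hp'.comp hφ.tendsto_atTop
  have hb'M : b' ∈ M :=
    (hreach.isClosed hr).mem_of_tendsto hlim (.of_forall fun n ↦ hbM (φ n))
  have hpb' : dist p b' = infDist p M := by
    refine tendsto_nhds_unique (hp'φ.dist hlim) ?_
    simp only [Function.comp_def, hb]
    exact ((continuous_infDist_pt M).tendsto p).comp hp'φ
  have hb'm : b' = m := (hreach p hp).unique ⟨hb'M, hpb'⟩ ⟨hm, hpm⟩
  have : η ≤ dist b' m := ge_of_tendsto (hlim.dist tendsto_const_nhds) (.of_forall fun n ↦ hbη _)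
  rw [hb'm, dist_self] at this
  linarith

theorem eventually_le_infDist_add_smul (hreach : HasReach M r) (hr : 0 < r)
    {p m : EuclideanSpace ℝ (Fin d)} (hp : infDist p M < r) (hm : m ∈ M)
    (hpm : dist p m = infDist p M) {θ : ℝ} (hθ0 : 0 ≤ θ) (hθ1 : θ < 1) :
    ∀ᶠ t in 𝓝[>] 0, (1 + θ * t) * infDist p M ≤ infDist (p + t • (p - m)) M := by
  set D := infDist p M
  have hcurve : Tendsto (fun t : ℝ ↦ p + t • (p - m)) (𝓝[>] 0) (𝓝 p) := by
    refine tendsto_nhdsWithin_of_tendsto_nhds ?_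
    simpa using ((continuous_id.smul continuous_const).const_add p).tendsto (0 : ℝ)
  have hη : 0 ≤ (1 - θ) * D := mul_nonneg (by linarith) infDist_nonneg
  rcases hη.eq_or_lt with hη | hη
  · have hD : D = 0 := by nlinarith [infDist_nonneg (x := p) (s := M)]
    exact .of_forall fun t ↦ by simpa [hD] using infDist_nonneg
  filter_upwards [hcurve.eventually (hreach.eventually_nearest_mem_ball hr hp hm hpm hη),
    self_mem_nhdsWithin] with t hnear (ht : 0 < t)
  have hD : 0 ≤ D := infDist_nonneg
  -- the nearest point `b` of the moved point is close to `m`, so `⟪p - b, p - m⟫ ≈ D ^ 2`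
  obtain ⟨b, hbM, hb⟩ := (hreach.isClosed hr).exists_infDist_eq_dist ⟨m, hm⟩ (p + t • (p - m))
  have hbm : ‖b - m‖ < (1 - θ) * D := by simpa [dist_eq_norm] using hnear b hbM hb.symm
  have hpm' : ‖p - m‖ = D := by rw [← dist_eq_norm, hpm]
  have hpb : D ≤ ‖p - b‖ := by rw [← dist_eq_norm]; exact infDist_le_dist_of_mem hbM
  have hinner : ⟪b - m, p - m⟫ ≤ ‖b - m‖ * D := hpm' ▸ real_inner_le_norm _ _
  have hexpand : ‖p + t • (p - m) - b‖ ^ 2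
      = ‖p - b‖ ^ 2 + 2 * t * (D ^ 2 - ⟪b - m, p - m⟫) + t ^ 2 * D ^ 2 := by
    have : p + t • (p - m) - b = (p - b) + t • (p - m) := by abel
    rw [this, norm_add_sq_real, norm_smul, real_inner_smul_right, Real.norm_eq_abs, mul_pow,
      sq_abs, hpm']
    have : p - b = (p - m) - (b - m) := by abel
    rw [this, inner_sub_left, real_inner_self_eq_norm_sq, hpm', real_inner_comm]
    ring
  rw [hb, dist_eq_norm, ← pow_le_pow_iff_left₀ (by positivity) (norm_nonneg _) two_ne_zero,
    hexpand]
  have hθsq : θ ^ 2 * (t ^ 2 * D ^ 2) ≤ t ^ 2 * D ^ 2 :=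
    mul_le_of_le_one_left (by positivity) (by nlinarith)
  have h1 := mul_le_mul_of_nonneg_left hinner ht.le
  have h2 := mul_le_mul_of_nonneg_left hbm.le (mul_nonneg ht.le hD)
  have h3 := pow_le_pow_left₀ hD hpb 2
  nlinarith

theorem exists_mul_dist_le_sub_and_le_infDist (hreach : HasReach M r) (hr : 0 < r)
    {x : EuclideanSpace ℝ (Fin d)} (hx : 0 < infDist x M) (hxr : infDist x M < r) {θ : ℝ}
    (hθ0 : 0 < θ) (hθ1 : θ < 1) {y : ℝ} (hy : infDist x M < y) :
    ∃ x' t', t' ∈ Ioc (infDist x M) y ∧ θ * dist x' x ≤ t' - infDist x M ∧ t' ≤ infDist x' M := by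
  set t := infDist x M
  obtain ⟨m, ⟨hmM, hxm⟩, -⟩ := hreach x hxr
  have hε : 0 < (y - t) / (θ * t) := div_pos (by linarith) (by positivity)
  obtain ⟨τ, hτ, hτ0, hτε⟩ :=
    ((hreach.eventually_le_infDist_add_smul hr hxr hmM hxm hθ0.le hθ1).and
      (Ioo_mem_nhdsGT hε)).exists
  rw [lt_div_iff₀ (by positivity), lt_sub_iff_add_lt] at hτε
  have hdist : dist (x + τ • (x - m)) x = τ * t := by
    rw [dist_eq_norm, add_sub_cancel_left, norm_smul, Real.norm_eq_abs, abs_of_pos hτ0,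
      ← dist_eq_norm, hxm]
  refine ⟨x + τ • (x - m), t + θ * τ * t, ⟨?_, by linarith⟩, by rw [hdist]; linarith,
    by linarith⟩
  have : 0 < θ * τ * t := by positivity
  linarith

/-- Continuous induction on the level `t` reached. -/
theorem exists_mul_dist_le_and_le_infDist (hreach : HasReach M r) (hr : 0 < r)
    {q : EuclideanSpace ℝ (Fin d)} (hq : 0 < infDist q M) {ρ : ℝ} (hqρ : infDist q M ≤ ρ)
    (hρ : ρ < r) {θ : ℝ} (hθ0 : 0 < θ) (hθ1 : θ < 1) :
    ∃ x, θ * dist x q ≤ ρ - infDist q M ∧ ρ ≤ infDist x M := by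
  set d₀ := infDist q M
  set R := (ρ - d₀) / θ
  have hball : ∀ x t, t ≤ ρ → θ * dist x q ≤ t - d₀ → x ∈ closedBall q R := fun x t ht hx ↦ by
    rw [mem_closedBall, le_div_iff₀ hθ0]
    linarith
  set s := {t | ∃ x ∈ closedBall q R,
    (t, x) ∈ {p : ℝ × EuclideanSpace ℝ (Fin d) | θ * dist p.2 q ≤ p.1 - d₀ ∧ p.1 ≤ infDist p.2 M}}
  have hs : IsClosed s := by
    refine isClosed_setOf_exists_mem_of_isCompact (isCompact_closedBall q R) ?_
    exact (isClosed_le (continuous_const.mul (continuous_snd.dist continuous_const))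
      (continuous_fst.sub continuous_const)).inter
      (isClosed_le continuous_fst ((continuous_infDist_pt M).comp continuous_snd))
  have hd₀ : d₀ ∈ s := ⟨q, hball q d₀ hqρ (by simp), by simp, le_rfl⟩
  have hstep : ∀ t ∈ s ∩ Ico d₀ ρ, ∀ y ∈ Ioi t, (s ∩ Ioc t y).Nonempty := by
    rintro t ⟨⟨x, -, hxq, htx⟩, htd₀, htρ⟩ y (hty : t < y)
    rcases htx.lt_or_eq with htx | (htx : t = infDist x M)
    · set t' := min (min y ρ) (infDist x M)
      have ht'ρ : t' ≤ ρ := (min_le_left _ _).trans (min_le_right _ _)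
      exact ⟨t', ⟨x, hball x t' ht'ρ (by linarith [le_min (le_min hty.le htρ.le) htx.le]),
        by linarith [le_min (le_min hty.le htρ.le) htx.le], min_le_right _ _⟩,
        lt_min (lt_min hty htρ) htx, (min_le_left _ _).trans (min_le_left _ _)⟩
    · obtain ⟨x', t', ⟨htt', ht'y⟩, hx'x, ht'x'⟩ :=
        hreach.exists_mul_dist_le_sub_and_le_infDist hr (htx ▸ hq.trans_le htd₀)
          (htx ▸ htρ.trans hρ) hθ0 hθ1 (y := min y ρ) (htx ▸ lt_min hty htρ)
      rw [← htx] at htt' hx'x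
      have hx'q : θ * dist x' q ≤ t' - d₀ := by
        nlinarith [dist_triangle x' x q]
      exact ⟨t', ⟨x', hball x' t' (ht'y.trans (min_le_right _ _)) hx'q, hx'q, ht'x'⟩, htt',
        ht'y.trans (min_le_left _ _)⟩
  obtain ⟨x, -, hx⟩ :=
    (hs.inter isClosed_Icc).Icc_subset_of_forall_exists_gt hd₀ hstep ⟨hqρ, le_rfl⟩
  exact ⟨x, hx⟩

theorem exists_dist_le_and_le_infDist (hreach : HasReach M r) (hr : 0 < r)
    {q : EuclideanSpace ℝ (Fin d)} (hq : 0 < infDist q M) {ρ : ℝ} (hqρ : infDist q M ≤ ρ)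
    (hρ : ρ < r) : ∃ x, dist x q ≤ ρ - infDist q M ∧ ρ ≤ infDist x M := by
  set d₀ := infDist q M
  set S := {θ | ∃ x ∈ closedBall q (2 * (ρ - d₀)),
    (θ, x) ∈ {p : ℝ × EuclideanSpace ℝ (Fin d) | p.1 * dist p.2 q ≤ ρ - d₀ ∧ ρ ≤ infDist p.2 M}}
  have hS : IsClosed S := by
    refine isClosed_setOf_exists_mem_of_isCompact (isCompact_closedBall _ _) ?_
    exact (isClosed_le (continuous_fst.mul (continuous_snd.dist continuous_const))
      continuous_const).inter
      (isClosed_le continuous_const ((continuous_infDist_pt M).comp continuous_snd))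
  have hIoo : Ioo (1 / 2) 1 ⊆ S := fun θ ⟨hθ2, hθ1⟩ ↦ by
    obtain ⟨x, hxq, hρx⟩ :=
      hreach.exists_mul_dist_le_and_le_infDist hr hq hqρ hρ (by linarith) hθ1
    refine ⟨x, ?_, hxq, hρx⟩
    rw [mem_closedBall]
    nlinarith [dist_nonneg (x := x) (y := q)]
  obtain ⟨x, -, hxq, hρx⟩ :=
    closure_minimal hIoo hS (by rw [closure_Ioo (by norm_num)]; norm_num : (1 : ℝ) ∈ _)
  exact ⟨x, by simpa using hxq, hρx⟩

/-- The point reached at level `ρ` lies on the ray from `m` through `q`, and `m` is still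
nearest to it. -/
theorem two_mul_inner_le_of_infDist_le (hreach : HasReach M r) (hr : 0 < r)
    {q m b : EuclideanSpace ℝ (Fin d)} (hm : m ∈ M) (hqm : dist q m = infDist q M)
    {ρ : ℝ} (hqρ : infDist q M ≤ ρ) (hρ : ρ < r) (hb : b ∈ M) :
    2 * ρ * ⟪q - m, b - m⟫ ≤ infDist q M * ‖b - m‖ ^ 2 := by
  rcases (infDist_nonneg (x := q) (s := M)).eq_or_lt with hq | hq
  · rw [← hq, dist_eq_zero] at hqm
    rw [hqm, sub_self, inner_zero_left, mul_zero]
    exact mul_nonneg infDist_nonneg (sq_nonneg _)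
  obtain ⟨x, hxq, hρx⟩ := hreach.exists_dist_le_and_le_infDist hr hq hqρ hρ
  have hρxm : ρ ≤ dist x m := hρx.trans (infDist_le_dist_of_mem hm)
  have hxm : dist x m = ρ := le_antisymm (by linarith [dist_triangle x q m]) hρxm
  obtain ⟨s, ⟨hs0, -⟩, hsq⟩ : Wbtw ℝ m q x := dist_add_dist_eq_iff.1 <| by
    rw [dist_comm m q, hqm, dist_comm q x, dist_comm m x, hxm]
    linarith [dist_triangle x q m]
  have hqm' : q - m = s • (x - m) := by
    rw [← hsq, ← vsub_eq_sub, AffineMap.lineMap_vsub_left, vsub_eq_sub]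
  have hd₀ : infDist q M = s * ρ := by
    rw [← hqm, dist_eq_norm, hqm', norm_smul, Real.norm_eq_abs, abs_of_nonneg hs0,
      ← dist_eq_norm, hxm]
  have hx : 2 * ⟪x - m, b - m⟫ ≤ ‖b - m‖ ^ 2 :=
    two_mul_inner_le_norm_sq_of_dist_le ((hxm.trans_le hρx).trans (infDist_le_dist_of_mem hb))
  calc 2 * ρ * ⟪q - m, b - m⟫ = ρ * s * (2 * ⟪x - m, b - m⟫) := by
        rw [hqm', real_inner_smul_left]; ring
    _ ≤ ρ * s * ‖b - m‖ ^ 2 := mul_le_mul_of_nonneg_left hx (by nlinarith)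
    _ = infDist q M * ‖b - m‖ ^ 2 := by rw [hd₀]; ring

theorem two_mul_inner_le (hreach : HasReach M r) (hr : 0 < r)
    {q m b : EuclideanSpace ℝ (Fin d)} (hm : m ∈ M) (hqm : dist q m = infDist q M)
    (hq : infDist q M < r) (hb : b ∈ M) :
    2 * r * ⟪q - m, b - m⟫ ≤ infDist q M * ‖b - m‖ ^ 2 := by
  refine le_of_tendsto (f := fun ρ ↦ 2 * ρ * ⟪q - m, b - m⟫) (x := 𝓝[<] r) ?_ ?_
  · exact ((continuous_const.mul continuous_id).mul continuous_const).tendsto r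
      |>.mono_left nhdsWithin_le_nhds
  · filter_upwards [Ioo_mem_nhdsLT hq] with ρ hρ
    exact hreach.two_mul_inner_le_of_infDist_le hr hm hqm hρ.1.le hρ.2 hb

/-- `w` is the limit of the proximal normals `τ⁻¹ • (y + τ • w - m τ)`, where `m τ` is a nearest
point of `y + τ • w`. -/
theorem two_mul_inner_le_of_forall_tangentConeAt (hreach : HasReach M r) (hr : 0 < r)
    {y w b : EuclideanSpace ℝ (Fin d)} (hy : y ∈ M)
    (hw : ∀ v ∈ tangentConeAt ℝ M y, ⟪w, v⟫ ≤ 0) (hb : b ∈ M) :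
    2 * r * ⟪w, b - y⟫ ≤ ‖w‖ * ‖b - y‖ ^ 2 := by
  choose m hmM hm using (hreach.isClosed hr).exists_infDist_eq_dist ⟨y, hy⟩
  set μ : ℝ → EuclideanSpace ℝ (Fin d) := fun τ ↦ m (y + τ • w)
  have hlo : (fun τ ↦ μ τ - y) =o[𝓝[>] 0] fun τ ↦ τ :=
    isLittleO_sub_of_forall_tangentConeAt hw (fun τ ↦ hmM _)
      fun τ ↦ (hm _).symm.trans_le (infDist_le_dist_of_mem hy)
  have hμy : Tendsto μ (𝓝[>] 0) (𝓝 y) := by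
    simpa using (hlo.trans_tendsto (tendsto_id.mono_left nhdsWithin_le_nhds)).add_const y
  have hu : Tendsto (fun τ ↦ τ⁻¹ • (y + τ • w - μ τ)) (𝓝[>] 0) (𝓝 w) := by
    have h := tendsto_const_nhds (x := w) |>.sub hlo.tendsto_inv_smul_nhds_zero
    rw [sub_zero] at h
    refine h.congr' ?_
    filter_upwards [self_mem_nhdsWithin] with τ (hτ : 0 < τ)
    rw [show y + τ • w - μ τ = τ • w - (μ τ - y) by abel, smul_sub τ⁻¹ (τ • w),
      inv_smul_smul₀ hτ.ne']
  have hq : ∀ᶠ τ : ℝ in 𝓝[>] 0, infDist (y + τ • w) M < r := by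
    have h : Tendsto (fun τ : ℝ ↦ infDist (y + τ • w) M) (𝓝[>] 0)
        (𝓝 (infDist (y + (0 : ℝ) • w) M)) :=
      (Continuous.tendsto (by fun_prop) 0).mono_left nhdsWithin_le_nhds
    rw [zero_smul, add_zero, infDist_zero_of_mem hy] at h
    exact h.eventually (gt_mem_nhds hr)
  have hev : ∀ᶠ τ in 𝓝[>] 0, 2 * r * ⟪τ⁻¹ • (y + τ • w - μ τ), b - μ τ⟫
      ≤ ‖τ⁻¹ • (y + τ • w - μ τ)‖ * ‖b - μ τ‖ ^ 2 := by
    filter_upwards [hq, self_mem_nhdsWithin] with τ hτr (hτ0 : 0 < τ)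
    have h := hreach.two_mul_inner_le hr (hmM _) (hm _).symm hτr hb
    rw [hm, dist_eq_norm] at h
    rw [real_inner_smul_left, norm_smul, Real.norm_eq_abs, abs_inv, abs_of_pos hτ0]
    have := mul_le_mul_of_nonneg_left h (inv_nonneg.2 hτ0.le)
    linarith
  exact le_of_tendsto_of_tendsto ((hu.inner (tendsto_const_nhds.sub hμy)).const_mul (2 * r))
    (hu.norm.mul ((tendsto_const_nhds.sub hμy).norm.pow 2)) hev

end HasReach

/-- Second fundamental form bound: for a local unit normal field N of a set M of reach r,
⟨Y, D_Y N⟩ / ⟨Y, Y⟩ ≤ 1/r for tangent vectors Y. -/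
theorem stmt14 {d : ℕ} (M : Set (EuclideanSpace ℝ (Fin d))) (r : ℝ) (hr : 0 < r)
    (hreach : HasReach M r) (x : EuclideanSpace ℝ (Fin d)) (hx : x ∈ M)
    (U : Set (EuclideanSpace ℝ (Fin d))) (hU : U ∈ nhds x)
    (N : EuclideanSpace ℝ (Fin d) → EuclideanSpace ℝ (Fin d))
    (hN : ContDiffAt ℝ 1 N x)
    (hunit : ∀ y ∈ M ∩ U, ‖N y‖ = 1)
    (hnormal : ∀ y ∈ M ∩ U, ∀ v ∈ tangentConeAt ℝ M y, (inner ℝ (N y) v : ℝ) = 0)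
    (Y : EuclideanSpace ℝ (Fin d)) (hY : Y ∈ tangentConeAt ℝ M x) (hYne : Y ≠ 0) :
    (inner ℝ Y (fderiv ℝ N x Y) : ℝ) / (inner ℝ Y Y : ℝ) ≤ 1 / r := by
  have hfederer : ∀ y ∈ M ∩ U, ∀ b ∈ M, 2 * r * ⟪-N y, b - y⟫ ≤ ‖b - y‖ ^ 2 := fun y hy b hb ↦ by
    have h := hreach.two_mul_inner_le_of_forall_tangentConeAt hr hy.1
      (fun v hv ↦ by rw [inner_neg_left, hnormal y hy v hv, neg_zero]) hb
    rwa [norm_neg, hunit y hy, one_mul] at h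
  have hmono : ∀ᶠ y in 𝓝[M] x, ⟪N y - N x, y - x⟫ ≤ r⁻¹ * ‖y - x‖ ^ 2 := by
    filter_upwards [self_mem_nhdsWithin, nhdsWithin_le_nhds hU] with y hyM hyU
    have h₁ := hfederer x ⟨hx, mem_of_mem_nhds hU⟩ y hyM
    have h₂ := hfederer y ⟨hyM, hyU⟩ x hx
    rw [← neg_sub y x, norm_neg, inner_neg_right, inner_neg_left, neg_neg] at h₂
    rw [inner_neg_left] at h₁
    rw [inner_sub_left, inv_mul_eq_div, le_div_iff₀ hr]
    linarith
  have hY2 : 0 < ‖Y‖ ^ 2 := pow_pos (norm_pos_iff.2 hYne) 2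
  have := inner_fderiv_apply_le_of_eventually (hN.differentiableAt one_ne_zero) hmono hY
  rwa [real_inner_self_eq_norm_sq, real_inner_comm, div_le_iff₀ hY2, one_div]
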